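/- With the stable-1/2 bridge density f_{tT}(y;z) as above, the second moment is ∫₀^z y² f_{tT}(y;z) dy = (t/T) z² { 1 − c(T−t) e^{c²T²/(2z)} √(2π/z) Φ(−cT z^{-1/2}) }. -/

import Mathlib

/-!
Substituting `y = z / (1 + u)` turns the second moment into a constant times
`∫₀^∞ u^(-3/2) (1 + u)⁻¹ exp (-(A / u + B u) / 2) du`, where `A = c²(T - t)²/z`, `B = c²t²/z`.
Writing `(1 + u)⁻¹ = ∫₀^∞ exp (-(1 + u) s) ds` and exchanging the integrals, the inner
integral is the inverse Gaussian normalisation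
`∫₀^∞ u^(-3/2) exp (-(a / u + b u) / 2) du = √(2π/a) exp (-√(ab))`, which follows from the
Cauchy–Schlömilch substitution `w = √b √u - √a / √u` and the symmetry `u ↦ a / (b u)`.
After `v = √(B + 2s)` the outer integral is a Gaussian tail, which produces `Φ`.
-/

open MeasureTheory Real Set

/-- Standard normal cumulative distribution function. -/
noncomputable def Phi (x : ℝ) : ℝ :=
  (Real.sqrt (2 * Real.pi))⁻¹ * ∫ u in Set.Iic x, Real.exp (-(u ^ 2) / 2)

/-- Marginal density at time `t` of the stable-1/2 bridge from `0` at time `0` to `z` at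
time `T`, with activity parameter `c`. -/
noncomputable def stableBridgeDen (c T t z y : ℝ) : ℝ :=
  (1 / Real.sqrt (2 * Real.pi)) * (c * t * (T - t) / T) *
    (Real.exp (-(c ^ 2 * (T * y - t * z) ^ 2) / (2 * y * z * (z - y))) /
      (y - y ^ 2 / z) ^ ((3 : ℝ) / 2))

open Filter Topology

lemma integral_exp_neg_sq_div_two : ∫ x : ℝ, exp (-(x ^ 2) / 2) = √(2 * π) := by
  convert integral_gaussian (1 / 2) using 2 with x
  · ring_nf
  · ring_nf

lemma integrable_exp_neg_sq_div_two : Integrable fun x : ℝ => exp (-(x ^ 2) / 2) := by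
  convert integrable_exp_neg_mul_sq (b := 1 / 2) (by norm_num) using 3 with x
  ring

lemma integrable_mul_exp_neg_sq_div_two : Integrable fun x : ℝ => x * exp (-(x ^ 2) / 2) := by
  convert integrable_mul_exp_neg_mul_sq (b := 1 / 2) (by norm_num) using 4 with x
  ring

lemma integral_Ioi_exp_neg_sq_div_two (x : ℝ) :
    ∫ w in Ioi x, exp (-(w ^ 2) / 2) = √(2 * π) * Phi (-x) := by
  have h := integral_comp_neg_Iic (-x) (fun w => exp (-(w ^ 2) / 2))
  simp only [neg_neg, neg_sq] at h
  rw [Phi, ← h, ← mul_assoc, mul_inv_cancel₀ (by positivity), one_mul]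

lemma integral_Ioi_mul_exp_neg_sq_div_two (x : ℝ) :
    ∫ w in Ioi x, w * exp (-(w ^ 2) / 2) = exp (-(x ^ 2) / 2) := by
  have hderiv : ∀ w ∈ Ici x,
      HasDerivAt (fun w => -exp (-(w ^ 2) / 2)) (w * exp (-(w ^ 2) / 2)) w := by
    intro w _
    have h : HasDerivAt (fun w : ℝ => -(w ^ 2) / 2) (-w) w :=
      ((hasDerivAt_pow 2 w).fun_neg.div_const 2).congr_deriv (by push_cast; ring)
    exact h.exp.fun_neg.congr_deriv (by ring)
  have hlim : Tendsto (fun w : ℝ => -exp (-(w ^ 2) / 2)) atTop (𝓝 0) := by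
    have h : Tendsto (fun w : ℝ => -(w ^ 2) / 2) atTop atBot :=
      (tendsto_neg_atTop_atBot.comp (tendsto_pow_atTop two_ne_zero)).atBot_div_const two_pos
    simpa using (tendsto_exp_atBot.comp h).neg
  rw [integral_Ioi_of_hasDerivAt_of_tendsto' hderiv
    integrable_mul_exp_neg_sq_div_two.integrableOn hlim]
  ring

lemma integral_Ioi_comp_add_right {E : Type*} [NormedAddCommGroup E] [NormedSpace ℝ E]
    (f : ℝ → E) (a c : ℝ) : ∫ v in Ioi c, f (v + a) = ∫ w in Ioi (c + a), f w := by
  have h := integral_image_eq_integral_abs_deriv_smul (s := Ioi c) measurableSet_Ioi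
    (fun x _ => ((hasDerivAt_id x).add_const a).hasDerivWithinAt) (add_left_injective a).injOn f
  simpa [image_add_const_Ioi] using h.symm

lemma integral_Ioi_mul_exp_neg_sq_div_two_sub_mul (a c : ℝ) :
    ∫ v in Ioi c, v * exp (-(v ^ 2) / 2 - a * v)
      = exp (-(c ^ 2) / 2 - a * c) - a * exp (a ^ 2 / 2) * √(2 * π) * Phi (-(c + a)) := by
  have h_split : ∀ v : ℝ, v * exp (-(v ^ 2) / 2 - a * v)
      = exp (a ^ 2 / 2) * ((v + a) * exp (-((v + a) ^ 2) / 2))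
        - a * exp (a ^ 2 / 2) * exp (-((v + a) ^ 2) / 2) := by
    intro v
    rw [show -(v ^ 2) / 2 - a * v = a ^ 2 / 2 + -((v + a) ^ 2) / 2 by ring, exp_add]
    ring
  rw [setIntegral_congr_fun measurableSet_Ioi (fun v _ => h_split v),
    integral_sub ((integrable_mul_exp_neg_sq_div_two.comp_add_right a).integrableOn.const_mul _)
      ((integrable_exp_neg_sq_div_two.comp_add_right a).integrableOn.const_mul _),
    integral_const_mul, integral_const_mul,
    integral_Ioi_comp_add_right (fun w => w * exp (-(w ^ 2) / 2)),
    integral_Ioi_mul_exp_neg_sq_div_two,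
    integral_Ioi_comp_add_right (fun w => exp (-(w ^ 2) / 2)), integral_Ioi_exp_neg_sq_div_two,
    ← exp_add, show a ^ 2 / 2 + -((c + a) ^ 2) / 2 = -(c ^ 2) / 2 - a * c by ring]
  ring

lemma integral_Ioi_exp_neg_mul_exp_neg_mul_sqrt (α : ℝ) {b : ℝ} (hb : 0 ≤ b) :
    ∫ s in Ioi 0, exp (-s) * exp (-(α * √(b + 2 * s)))
      = exp (-(α * √b)) - α * exp ((α ^ 2 + b) / 2) * √(2 * π) * Phi (-(√b + α)) := by
  set σ : ℝ → ℝ := fun v => (v ^ 2 - b) / 2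
  have hderiv : ∀ v ∈ Ioi √b, HasDerivWithinAt σ v (Ioi √b) v := fun v _ =>
    (((hasDerivAt_pow 2 v).sub_const b).div_const 2).congr_deriv (by ring) |>.hasDerivWithinAt
  have hinj : InjOn σ (Ioi √b) := by
    intro x (hx : √b < x) y (hy : √b < y) h
    simp only [σ] at h
    nlinarith [sqrt_nonneg b]
  have himg : σ '' Ioi √b = Ioi 0 := by
    ext s
    constructor
    · rintro ⟨v, hv : √b < v, rfl⟩
      have : b < v ^ 2 := by nlinarith [sq_sqrt hb, sqrt_nonneg b]
      show 0 < (v ^ 2 - b) / 2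
      linarith
    · intro (hs : 0 < s)
      refine ⟨√(b + 2 * s), sqrt_lt_sqrt hb (by linarith), ?_⟩
      simp only [σ]
      rw [sq_sqrt (by linarith)]
      ring
  have h := integral_image_eq_integral_abs_deriv_smul measurableSet_Ioi hderiv hinj
    fun s => exp (-s) * exp (-(α * √(b + 2 * s)))
  have hpt : ∀ v ∈ Ioi √b, |v| • (exp (-σ v) * exp (-(α * √(b + 2 * σ v))))
      = exp (b / 2) * (v * exp (-(v ^ 2) / 2 - α * v)) := by
    intro v (hv : √b < v)
    have hv0 : 0 < v := (sqrt_nonneg b).trans_lt hv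
    have hsq : b + 2 * σ v = v ^ 2 := by simp only [σ]; ring
    rw [hsq, sqrt_sq hv0.le, abs_of_pos hv0, smul_eq_mul, ← exp_add,
      show -σ v + -(α * v) = b / 2 + (-(v ^ 2) / 2 - α * v) by simp only [σ]; ring, exp_add]
    ring
  rw [himg, setIntegral_congr_fun measurableSet_Ioi hpt, integral_const_mul,
    integral_Ioi_mul_exp_neg_sq_div_two_sub_mul, sq_sqrt hb] at h
  rw [h, mul_sub, ← exp_add, show b / 2 + (-b / 2 - α * √b) = -(α * √b) by ring,
    show (α ^ 2 + b) / 2 = b / 2 + α ^ 2 / 2 by ring, exp_add]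
  ring

section InverseGaussian

noncomputable def schlomilch (a b u : ℝ) : ℝ := √b * √u - √a / √u

noncomputable def inverseGaussianKernel (a b u : ℝ) : ℝ :=
  (u * √u)⁻¹ * exp (-(a / u + b * u) / 2)

variable {a b : ℝ}

lemma inverseGaussianKernel_nonneg (a b : ℝ) {u : ℝ} (hu : 0 ≤ u) :
    0 ≤ inverseGaussianKernel a b u := by
  unfold inverseGaussianKernel
  positivity

lemma continuousOn_inverseGaussianKernel (a b : ℝ) :
    ContinuousOn (inverseGaussianKernel a b) (Ioi 0) := by
  intro u (hu : 0 < u)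
  unfold inverseGaussianKernel
  fun_prop (disch := positivity)

lemma hasDerivAt_schlomilch (a b : ℝ) {u : ℝ} (hu : 0 < u) :
    HasDerivAt (schlomilch a b) ((√b * u + √a) / (2 * (u * √u))) u := by
  have hsqrt := hasDerivAt_sqrt hu.ne'
  have hsu : 0 < √u := sqrt_pos.2 hu
  refine ((hsqrt.const_mul √b).sub ((hasDerivAt_const u √a).div hsqrt hsu.ne')).congr_deriv ?_
  field_simp
  rw [sq_sqrt hu.le]
  ring

lemma strictMonoOn_schlomilch (a : ℝ) (hb : 0 < b) : StrictMonoOn (schlomilch a b) (Ioi 0) := by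
  intro x hx y hy hxy
  have hsx : 0 < √x := sqrt_pos.2 hx
  have hxy' : √x < √y := sqrt_lt_sqrt (le_of_lt hx) hxy
  have h1 : √b * √x < √b * √y := mul_lt_mul_of_pos_left hxy' (sqrt_pos.2 hb)
  have h2 : √a / √y ≤ √a / √x := div_le_div_of_nonneg_left (sqrt_nonneg a) hsx hxy'.le
  simp only [schlomilch]
  linarith

lemma image_schlomilch_Ioi (ha : 0 < a) (hb : 0 < b) : schlomilch a b '' Ioi 0 = univ := by
  refine eq_univ_of_forall fun x => ?_
  -- the positive root `s = √u` of `√b s² - x s - √a = 0`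
  set d := √(x ^ 2 + 4 * √a * √b)
  have hd2 : d ^ 2 = x ^ 2 + 4 * √a * √b := sq_sqrt (by positivity)
  have hsa : 0 < √a := sqrt_pos.2 ha
  have hsb : 0 < √b := sqrt_pos.2 hb
  have hxd : 0 < x + d := by nlinarith [sqrt_nonneg (x ^ 2 + 4 * √a * √b)]
  set s := (x + d) / (2 * √b)
  have hs : 0 < s := by positivity
  have hs_eq : 2 * √b * s = x + d := mul_div_cancel₀ (x + d) (by positivity)
  refine ⟨s ^ 2, mem_Ioi.2 (by positivity), ?_⟩
  rw [schlomilch, sqrt_sq hs.le]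
  field_simp
  have : 4 * √b * (√b * s ^ 2 - x * s - √a) = 0 := by
    linear_combination (2 * √b * s - x + d) * hs_eq + hd2
  nlinarith

lemma schlomilch_sq (ha : 0 ≤ a) (hb : 0 ≤ b) {u : ℝ} (hu : 0 < u) :
    schlomilch a b u ^ 2 = a / u + b * u - 2 * √(a * b) := by
  rw [schlomilch, sqrt_mul ha]
  field_simp
  rw [sq_sqrt hu.le]
  linear_combination u * sq_sqrt ha + u ^ 3 * sq_sqrt hb

lemma integrableOn_and_integral_schlomilch (ha : 0 < a) (hb : 0 < b) (g : ℝ → ℝ) :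
    (Integrable g ↔ IntegrableOn
      (fun u => (√b * u + √a) / (2 * (u * √u)) * g (schlomilch a b u)) (Ioi 0)) ∧
    ∫ x, g x = ∫ u in Ioi 0, (√b * u + √a) / (2 * (u * √u)) * g (schlomilch a b u) := by
  have hderiv : ∀ u ∈ Ioi (0 : ℝ), HasDerivWithinAt (schlomilch a b)
      ((√b * u + √a) / (2 * (u * √u))) (Ioi 0) u :=
    fun u hu => (hasDerivAt_schlomilch a b hu).hasDerivWithinAt
  have hinj := (strictMonoOn_schlomilch a hb).injOn
  have habs : EqOn (fun u => |(√b * u + √a) / (2 * (u * √u))| • g (schlomilch a b u))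
      (fun u => (√b * u + √a) / (2 * (u * √u)) * g (schlomilch a b u)) (Ioi 0) := by
    intro u (hu : 0 < u)
    dsimp only
    rw [abs_of_pos (by positivity), smul_eq_mul]
  constructor
  · rw [← integrableOn_univ, ← image_schlomilch_Ioi ha hb,
      integrableOn_image_iff_integrableOn_abs_deriv_smul measurableSet_Ioi hderiv hinj]
    exact integrableOn_congr_fun habs measurableSet_Ioi
  · rw [← setIntegral_univ, ← image_schlomilch_Ioi ha hb,
      integral_image_eq_integral_abs_deriv_smul measurableSet_Ioi hderiv hinj]
    exact setIntegral_congr_fun measurableSet_Ioi habs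

lemma deriv_schlomilch_mul_gaussian (ha : 0 ≤ a) (hb : 0 ≤ b) {u : ℝ} (hu : 0 < u) :
    (√b * u + √a) / (2 * (u * √u)) * exp (-(schlomilch a b u ^ 2) / 2)
      = exp (√(a * b)) / 2 *
        (√b * (u * inverseGaussianKernel a b u) + √a * inverseGaussianKernel a b u) := by
  rw [schlomilch_sq ha hb hu, inverseGaussianKernel,
    show -(a / u + b * u - 2 * √(a * b)) / 2 = √(a * b) + -(a / u + b * u) / 2 by ring, exp_add]
  field_simp

lemma integrableOn_and_integral_schlomilch_gaussian (ha : 0 < a) (hb : 0 < b) :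
    IntegrableOn
      (fun u => √b * (u * inverseGaussianKernel a b u) + √a * inverseGaussianKernel a b u)
      (Ioi 0) ∧
    ∫ u in Ioi 0, (√b * (u * inverseGaussianKernel a b u) + √a * inverseGaussianKernel a b u)
      = 2 * exp (-√(a * b)) * √(2 * π) := by
  obtain ⟨hint, hintegral⟩ :=
    integrableOn_and_integral_schlomilch ha hb fun x => exp (-(x ^ 2) / 2)
  have hcongr := fun u (hu : u ∈ Ioi (0 : ℝ)) => deriv_schlomilch_mul_gaussian ha.le hb.le hu
  rw [integral_exp_neg_sq_div_two, setIntegral_congr_fun measurableSet_Ioi hcongr,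
    integral_const_mul] at hintegral
  have hF := (integrableOn_congr_fun hcongr measurableSet_Ioi).1
    (hint.1 integrable_exp_neg_sq_div_two)
  have hc : exp (√(a * b)) / 2 ≠ 0 := by positivity
  refine ⟨(integrable_const_mul_iff (IsUnit.mk0 _ hc) _).1 hF, ?_⟩
  set I := ∫ u in Ioi 0,
    (√b * (u * inverseGaussianKernel a b u) + √a * inverseGaussianKernel a b u)
  rw [hintegral, exp_neg]
  field_simp

lemma integral_mul_inverseGaussianKernel (ha : 0 < a) (hb : 0 < b) :
    ∫ u in Ioi 0, u * inverseGaussianKernel a b u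
      = √a / √b * ∫ u in Ioi 0, inverseGaussianKernel a b u := by
  -- the involution `u ↦ a / (b u)` of `(0, ∞)` leaves `a / u + b u` invariant
  set φ : ℝ → ℝ := fun u => a / (b * u)
  have hmaps : MapsTo φ (Ioi 0) (Ioi 0) := fun u (hu : 0 < u) =>
    show 0 < a / (b * u) by positivity
  have hinv : LeftInvOn φ φ (Ioi 0) := fun u (hu : 0 < u) => by
    simp only [φ]
    field_simp
  have hbij : BijOn φ (Ioi 0) (Ioi 0) := InvOn.bijOn ⟨hinv, hinv⟩ hmaps hmaps
  have hderiv : ∀ u ∈ Ioi (0 : ℝ), HasDerivWithinAt φ (-(a / (b * u ^ 2))) (Ioi 0) u := by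
    intro u (hu : 0 < u)
    refine ((hasDerivAt_const u a).div ((hasDerivAt_id u).const_mul b) (by positivity))
      |>.congr_deriv ?_ |>.hasDerivWithinAt
    simp only [id]
    field_simp
    ring
  have h := integral_image_eq_integral_abs_deriv_smul measurableSet_Ioi hderiv hbij.injOn
    fun u => u * inverseGaussianKernel a b u
  rw [hbij.image_eq] at h
  rw [h, ← integral_const_mul]
  refine setIntegral_congr_fun measurableSet_Ioi fun u (hu : 0 < u) => ?_
  have hE : a / φ u + b * φ u = a / u + b * u := by
    simp only [φ]
    field_simp
    ring
  simp only [smul_eq_mul, inverseGaussianKernel, hE]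
  rw [abs_of_neg (by simp only [neg_lt_zero]; positivity)]
  simp only [φ]
  rw [sqrt_div ha.le, sqrt_mul hb.le]
  field_simp
  rw [sq_sqrt ha.le, sq_sqrt hb.le, sq_sqrt hu.le]
  ring

lemma integrableOn_inverseGaussianKernel_and_mul (ha : 0 < a) (hb : 0 < b) :
    IntegrableOn (inverseGaussianKernel a b) (Ioi 0) ∧
      IntegrableOn (fun u => u * inverseGaussianKernel a b u) (Ioi 0) := by
  have hcont := continuousOn_inverseGaussianKernel a b
  have hk : ∀ᵐ u ∂volume.restrict (Ioi 0), 0 < u ∧ 0 ≤ inverseGaussianKernel a b u := by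
    filter_upwards [ae_restrict_mem measurableSet_Ioi] with u (hu : 0 < u)
    exact ⟨hu, inverseGaussianKernel_nonneg a b hu.le⟩
  have hsum := (integrable_add_iff_of_nonneg
    (f := fun u => √b * (u * inverseGaussianKernel a b u))
    (g := fun u => √a * inverseGaussianKernel a b u)
    (ContinuousOn.aestronglyMeasurable (by fun_prop) measurableSet_Ioi)
    (hk.mono fun u hu => mul_nonneg (sqrt_nonneg b) (mul_nonneg hu.1.le hu.2))
    (hk.mono fun u hu => mul_nonneg (sqrt_nonneg a) hu.2)).1
    (integrableOn_and_integral_schlomilch_gaussian ha hb).1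
  exact ⟨(integrable_const_mul_iff (IsUnit.mk0 _ (sqrt_pos.2 ha).ne') _).1 hsum.2,
    (integrable_const_mul_iff (IsUnit.mk0 _ (sqrt_pos.2 hb).ne') _).1 hsum.1⟩

lemma integral_inverseGaussianKernel (ha : 0 < a) (hb : 0 < b) :
    ∫ u in Ioi 0, inverseGaussianKernel a b u = √(2 * π / a) * exp (-√(a * b)) := by
  obtain ⟨hk, hmul⟩ := integrableOn_inverseGaussianKernel_and_mul ha hb
  have h := (integrableOn_and_integral_schlomilch_gaussian ha hb).2
  rw [integral_add (hmul.const_mul _) (hk.const_mul _), integral_const_mul, integral_const_mul,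
    integral_mul_inverseGaussianKernel ha hb] at h
  rw [sqrt_div' _ ha.le]
  field_simp at h ⊢
  linear_combination h / 2

end InverseGaussian

lemma integral_Ioi_exp_neg_mul {k : ℝ} (hk : 0 < k) : ∫ s in Ioi 0, exp (-(k * s)) = k⁻¹ := by
  simpa [neg_mul, one_div] using integral_exp_mul_Ioi (a := -k) (by linarith) 0

lemma integrable_inverseGaussianKernel_mul_exp_neg_one_add_mul {A B : ℝ} (hA : 0 < A)
    (hB : 0 < B) :
    Integrable (fun p : ℝ × ℝ => inverseGaussianKernel A B p.1 * exp (-((1 + p.1) * p.2)))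
      ((volume.restrict (Ioi 0)).prod (volume.restrict (Ioi 0))) := by
  have hexp : IntegrableOn (fun s : ℝ => exp (-s)) (Ioi 0) := by
    simpa using exp_neg_integrableOn_Ioi 0 one_pos
  have hbound := (integrableOn_inverseGaussianKernel_and_mul hA hB).1.mul_prod hexp
  rw [Measure.prod_restrict] at hbound ⊢
  have hcont : ContinuousOn
      (fun p : ℝ × ℝ => inverseGaussianKernel A B p.1 * exp (-((1 + p.1) * p.2)))
      (Ioi 0 ×ˢ Ioi 0) :=
    ((continuousOn_inverseGaussianKernel A B).comp continuous_fst.continuousOn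
      fun p hp => hp.1).mul (by fun_prop)
  refine hbound.mono' (hcont.aestronglyMeasurable (measurableSet_Ioi.prod measurableSet_Ioi)) ?_
  filter_upwards [ae_restrict_mem (measurableSet_Ioi.prod measurableSet_Ioi)]
    with ⟨u, s⟩ ⟨hu, hs⟩
  have hk := inverseGaussianKernel_nonneg A B (le_of_lt hu)
  simp only [norm_mul, norm_of_nonneg hk, norm_of_nonneg (exp_pos _).le]
  gcongr
  nlinarith [mem_Ioi.1 hu, mem_Ioi.1 hs]

lemma integral_inverseGaussianKernel_sq_sq_div_one_add {α β : ℝ} (hα : 0 < α) (hβ : 0 < β) :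
    ∫ u in Ioi 0, inverseGaussianKernel (α ^ 2) (β ^ 2) u / (1 + u)
      = √(2 * π) / α *
        (exp (-(α * β)) - α * exp ((α ^ 2 + β ^ 2) / 2) * √(2 * π) * Phi (-(β + α))) := by
  -- write `1 / (1 + u)` as a Laplace integral and integrate in `u` first
  have hlhs : ∫ u in Ioi 0, inverseGaussianKernel (α ^ 2) (β ^ 2) u / (1 + u)
      = ∫ u in Ioi 0, ∫ s in Ioi 0,
          inverseGaussianKernel (α ^ 2) (β ^ 2) u * exp (-((1 + u) * s)) := by
    refine setIntegral_congr_fun measurableSet_Ioi fun u (hu : 0 < u) => ?_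
    rw [integral_const_mul, integral_Ioi_exp_neg_mul (by linarith : 0 < 1 + u), div_eq_mul_inv]
  have hfactor : ∀ u s, inverseGaussianKernel (α ^ 2) (β ^ 2) u * exp (-((1 + u) * s))
      = exp (-s) * inverseGaussianKernel (α ^ 2) (β ^ 2 + 2 * s) u := by
    intro u s
    simp only [inverseGaussianKernel]
    rw [show -((1 + u) * s) = -s + -(s * u) by ring,
      show -(α ^ 2 / u + (β ^ 2 + 2 * s) * u) / 2 = -(α ^ 2 / u + β ^ 2 * u) / 2 + -(s * u) by ring,
      exp_add, exp_add]
    ring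
  have hrhs : ∫ s in Ioi 0, ∫ u in Ioi 0,
        inverseGaussianKernel (α ^ 2) (β ^ 2) u * exp (-((1 + u) * s))
      = √(2 * π) / α * ∫ s in Ioi 0, exp (-s) * exp (-(α * √(β ^ 2 + 2 * s))) := by
    rw [← integral_const_mul]
    refine setIntegral_congr_fun measurableSet_Ioi fun s (hs : 0 < s) => ?_
    simp only [hfactor]
    rw [integral_const_mul, integral_inverseGaussianKernel (by positivity) (by positivity),
      sqrt_div' _ (sq_nonneg α), sqrt_mul (sq_nonneg α), sqrt_sq hα.le]
    ring
  rw [hlhs, integral_integral_swap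
      (integrable_inverseGaussianKernel_mul_exp_neg_one_add_mul (by positivity) (by positivity)),
    hrhs, integral_Ioi_exp_neg_mul_exp_neg_mul_sqrt _ (sq_nonneg β), sqrt_sq hβ.le]

lemma integral_Ioo_zero_eq_integral_Ioi_div_one_add {E : Type*} [NormedAddCommGroup E]
    [NormedSpace ℝ E] {z : ℝ} (hz : 0 < z) (g : ℝ → E) :
    ∫ y in Ioo 0 z, g y = ∫ u in Ioi 0, (z / (1 + u) ^ 2) • g (z / (1 + u)) := by
  set ψ : ℝ → ℝ := fun u => z / (1 + u)
  have hderiv : ∀ u ∈ Ioi (0 : ℝ), HasDerivWithinAt ψ (-(z / (1 + u) ^ 2)) (Ioi 0) u := by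
    intro u (hu : 0 < u)
    refine ((hasDerivAt_const u z).div ((hasDerivAt_id u).const_add 1) (by positivity))
      |>.congr_deriv ?_ |>.hasDerivWithinAt
    simp only [id]
    field_simp
    ring
  have hinj : InjOn ψ (Ioi 0) := by
    intro x (hx : 0 < x) y (hy : 0 < y) h
    simp only [ψ] at h
    rw [div_eq_div_iff (by positivity) (by positivity)] at h
    nlinarith
  have himg : ψ '' Ioi 0 = Ioo 0 z := by
    ext y
    constructor
    · rintro ⟨u, hu : 0 < u, rfl⟩
      refine ⟨by positivity, (div_lt_iff₀ (by positivity)).2 (by nlinarith)⟩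
    · rintro ⟨hy, hyz⟩
      refine ⟨(z - y) / y, div_pos (by linarith) hy, ?_⟩
      simp only [ψ]
      field_simp
      ring
  rw [← himg, integral_image_eq_integral_abs_deriv_smul measurableSet_Ioi hderiv hinj]
  refine setIntegral_congr_fun measurableSet_Ioi fun u (hu : 0 < u) => ?_
  rw [abs_neg, abs_of_pos (by positivity)]

lemma sq_mul_stableBridgeDen_div_one_add (c T t : ℝ) {z u : ℝ} (hz : 0 < z) (hu : 0 < u) :
    z / (1 + u) ^ 2 * ((z / (1 + u)) ^ 2 * stableBridgeDen c T t z (z / (1 + u)))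
      = c * t * (T - t) / T / √(2 * π) * (z * √z) * exp (c ^ 2 * t * (T - t) / z) *
        (inverseGaussianKernel (c ^ 2 * (T - t) ^ 2 / z) (c ^ 2 * t ^ 2 / z) u / (1 + u)) := by
  have hbase : z / (1 + u) - (z / (1 + u)) ^ 2 / z = z * u / (1 + u) ^ 2 := by
    field_simp
    ring
  have hpow : (z / (1 + u) - (z / (1 + u)) ^ 2 / z) ^ ((3 : ℝ) / 2)
      = z * u / (1 + u) ^ 2 * (√z * √u / (1 + u)) := by
    rw [hbase, show (3 : ℝ) / 2 = 1 + 1 / 2 by norm_num, rpow_add (by positivity), rpow_one,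
      ← sqrt_eq_rpow, sqrt_div' _ (by positivity), sqrt_mul hz.le, sqrt_sq (by positivity)]
  have hexp : -(c ^ 2 * (T * (z / (1 + u)) - t * z) ^ 2)
        / (2 * (z / (1 + u)) * z * (z - z / (1 + u)))
      = c ^ 2 * t * (T - t) / z + -(c ^ 2 * (T - t) ^ 2 / z / u + c ^ 2 * t ^ 2 / z * u) / 2 := by
    field_simp [hu.ne']
    ring
  rw [stableBridgeDen, hpow, hexp, exp_add, inverseGaussianKernel]
  field_simp
  rw [sq_sqrt hz.le]
  ring

/-- Second moment of the stable-1/2 bridge marginal. -/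
theorem stable_half_bridge_second_moment (c T t z : ℝ)
    (hc : 0 < c) (ht : 0 < t) (htT : t < T) (hz : 0 < z) :
    (∫ y in Set.Ioo (0 : ℝ) z, y ^ 2 * stableBridgeDen c T t z y)
      = (t / T) * z ^ 2 *
          (1 - c * (T - t) * Real.exp (c ^ 2 * T ^ 2 / (2 * z)) *
            Real.sqrt (2 * Real.pi / z) * Phi (-(c * T * z ^ (-(1 : ℝ) / 2)))) := by
  have hTt : 0 < T - t := sub_pos.2 htT
  have hα : c ^ 2 * (T - t) ^ 2 / z = (c * (T - t) / √z) ^ 2 := by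
    rw [div_pow, sq_sqrt hz.le, mul_pow]
  have hβ : c ^ 2 * t ^ 2 / z = (c * t / √z) ^ 2 := by
    rw [div_pow, sq_sqrt hz.le, mul_pow]
  have hrpow : z ^ (-(1 : ℝ) / 2) = (√z)⁻¹ := by
    rw [neg_div, rpow_neg hz.le, ← sqrt_eq_rpow]
  rw [integral_Ioo_zero_eq_integral_Ioi_div_one_add hz,
    setIntegral_congr_fun measurableSet_Ioi fun u (hu : 0 < u) =>
      (smul_eq_mul _ _).trans (sq_mul_stableBridgeDen_div_one_add c T t hz hu),
    integral_const_mul, hα, hβ,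
    integral_inverseGaussianKernel_sq_sq_div_one_add (by positivity) (by positivity),
    hrpow, sqrt_div' _ hz.le]
  have hαβ : c * (T - t) / √z * (c * t / √z) = c ^ 2 * t * (T - t) / z := by
    rw [div_mul_div_comm, mul_self_sqrt hz.le]
    ring
  have hα2β2 : ((c * (T - t) / √z) ^ 2 + (c * t / √z) ^ 2) / 2
      = c ^ 2 * T ^ 2 / (2 * z) - c ^ 2 * t * (T - t) / z := by
    rw [div_pow, div_pow, sq_sqrt hz.le]
    field_simp
    ring
  rw [hαβ, hα2β2, exp_sub, exp_neg]
  field_simp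
  rw [sq_sqrt hz.le, add_sub_cancel]
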